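/- If n = 2s+1 is odd, then T_{s+1}(x) - T_s(x) = ∏_{d|n} Ψ̃_d(x), and if n = 2s is even, then T_{s+1}(x) - T_{s-1}(x) = ∏_{d|n} Ψ̃_d(x), where Ψ̃_d ∈ ℤ[x] is the integer-rescaled minimal polynomial of cos(2π/d) (with Ψ̃₁(x) = x - 1, Ψ̃_d(x) = 2^{deg Ψ_d}·Ψ_d(x) for d ≥ 2). -/

import Mathlib

open Real Polynomial Polynomial.Chebyshev

/-- `Ψ̃_d`: the integer-rescaled minimal polynomial of `cos (2π/d)`, with
`Ψ̃₁ = X - 1` and `Ψ̃_d = 2^(deg Ψ_d) • Ψ_d` for `d ≥ 2`. -/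
noncomputable def psiTilde (d : ℕ) : Polynomial ℚ :=
  if d = 1 then Polynomial.X - 1
  else (2 ^ (minpoly ℚ (Real.cos (2 * π / d))).natDegree : ℚ) •
    minpoly ℚ (Real.cos (2 * π / d))

/-!
For `a + b = n` we have `T_a(cos θ) - T_b(cos θ) = cos aθ - cos bθ`, which vanishes at
`θ = 2π/d` for every `d ∣ n`; so every `Ψ_d` with `d ∣ n` divides `T_a - T_b`. These minimal
polynomials are pairwise coprime, because a root `cos(2π/e)` of `Ψ_d ∣ T_d - 1` forces `e ∣ d`.
Since `ζ = e^{2πi/d}` has degree 2 over `ℚ(cos 2π/d)`, `deg Ψ_d = φ(d)/2` for `d ≥ 3`, and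
`∑_{d ∣ n} φ(d) = n` gives `∑_{d ∣ n} deg Ψ_d = ⌊n/2⌋ + 1`. With `a = ⌊n/2⌋ + 1` this is the
degree of `T_a - T_b`, whose leading coefficient is `2^⌊n/2⌋`, so
`T_a - T_b = 2^⌊n/2⌋ ∏_{d ∣ n} Ψ_d = ∏_{d ∣ n} Ψ̃_d`.
-/

open IntermediateField Module

namespace Polynomial.Chebyshev

variable {R : Type*} [CommRing R] [IsDomain R] [NeZero (2 : R)] {a b : ℕ}

theorem natDegree_T_sub_T_of_lt (h : b < a) : (T R a - T R b).natDegree = a := by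
  rw [natDegree_sub_eq_left_of_natDegree_lt] <;> simp [h]

theorem leadingCoeff_T_sub_T_of_lt (h : b < a) :
    (T R a - T R b).leadingCoeff = 2 ^ (a - 1) := by
  rw [leadingCoeff_sub_of_degree_lt] <;> simp [h]

end Polynomial.Chebyshev

theorem IntermediateField.finrank_adjoin_simple_eq_two_mul {K L : Type*} [Field K] [Field L]
    [Algebra K L] [NeZero (2 : L)] {z c : L} (hz : z ≠ 0) (hc : z + z⁻¹ = 2 * c)
    (hzc : z ∉ K⟮c⟯) : finrank K K⟮z⟯ = 2 * finrank K K⟮c⟯ := by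
  set q : K⟮c⟯[X] := X ^ 2 - Polynomial.C (2 * AdjoinSimple.gen K c) * X + 1
  have hq : q.Monic := by simp only [q]; monicity!
  have hroot : aeval z q = 0 := by
    have : z ^ 2 - 2 * c * z + 1 = 0 := by
      rw [← hc]; field_simp; ring
    simp only [q, map_add, map_sub, map_mul, map_pow, aeval_X, Polynomial.aeval_C, map_one,
      map_ofNat, AdjoinSimple.algebraMap_gen]
    exact this
  have hint : IsIntegral K⟮c⟯ z := ⟨q, hq, by rwa [← aeval_def]⟩
  have hdeg : (minpoly K⟮c⟯ z).natDegree = 2 := by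
    refine le_antisymm ?_ ?_
    · calc (minpoly K⟮c⟯ z).natDegree ≤ q.natDegree :=
            natDegree_le_of_dvd (minpoly.dvd _ _ hroot) hq.ne_zero
        _ = 2 := by simp only [q]; compute_degree!
    · rw [minpoly.two_le_natDegree_iff hint]
      rintro ⟨y, rfl⟩
      exact hzc y.2
  have hcz : c ∈ K⟮z⟯ := by
    have : c = (z + z⁻¹) / 2 := by rw [hc]; field_simp
    rw [this]
    exact div_mem (add_mem (mem_adjoin_simple_self K z) (inv_mem (mem_adjoin_simple_self K z)))
      (by simp)
  have htower : K⟮c⟯⟮z⟯.restrictScalars K = K⟮z⟯ := by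
    rw [adjoin_simple_adjoin_simple]
    refine le_antisymm (adjoin_le_iff.mpr ?_) (adjoin.mono _ _ _ (by simp))
    rintro y (rfl | rfl)
    exacts [hcz, mem_adjoin_simple_self K y]
  calc finrank K K⟮z⟯ = finrank K K⟮c⟯⟮z⟯ := by rw [← htower]; rfl
    _ = 2 * finrank K K⟮c⟯ := by
      rw [← Module.finrank_mul_finrank K K⟮c⟯ K⟮c⟯⟮z⟯, adjoin.finrank hint, hdeg, mul_comm]

theorem Complex.im_eq_zero_of_mem_adjoin_ofReal {x : ℝ} {z : ℂ} (hz : z ∈ ℚ⟮(x : ℂ)⟯) :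
    z.im = 0 := by
  have hmap : ℚ⟮(x : ℂ)⟯ = ℚ⟮x⟯.map ((Complex.ofRealAm).restrictScalars ℚ) := by
    rw [adjoin_map, Set.image_singleton]; rfl
  rw [hmap] at hz
  obtain ⟨y, -, rfl⟩ := hz
  exact Complex.ofReal_im y

local notation "Ψ" d => minpoly ℚ (cos (2 * π / (d : ℕ)))

theorem aeval_cos_two_pi_div_T_sub_T {d : ℕ} (hd : d ≠ 0) {a b : ℤ} (h : (d : ℤ) ∣ a + b) :
    aeval (cos (2 * π / d)) (T ℚ a - T ℚ b) = 0 := by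
  obtain ⟨m, hm⟩ := h
  have ha : (a : ℝ) * (2 * π / d) = m * (2 * π) - b * (2 * π / d) := by
    rw [show (a : ℝ) = d * m - b by rw [eq_sub_iff_add_eq]; exact_mod_cast hm]
    field_simp
  rw [map_sub, aeval_T, aeval_T, T_real_cos, T_real_cos, ha, cos_int_mul_two_pi_sub, sub_self]

theorem isIntegral_cos_two_pi_div {d : ℕ} (hd : d ≠ 0) : IsIntegral ℚ (cos (2 * π / d)) := by
  refine (isAlgebraic_iff_isIntegral).mp ⟨T ℚ d - T ℚ (0 : ℕ), fun h => hd ?_,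
    aeval_cos_two_pi_div_T_sub_T hd (by simp)⟩
  have := natDegree_T_sub_T_of_lt (R := ℚ) (Nat.pos_of_ne_zero hd)
  rwa [h, natDegree_zero, eq_comm] at this

theorem dvd_of_aeval_cos_two_pi_div_minpoly {d e : ℕ} (hd : d ≠ 0) (he : e ≠ 0)
    (h : aeval (cos (2 * π / e)) (Ψ d) = 0) : e ∣ d := by
  have hT : aeval (cos (2 * π / e)) (T ℚ d - T ℚ 0) = 0 := by
    obtain ⟨q, hq⟩ := minpoly.dvd ℚ _ (aeval_cos_two_pi_div_T_sub_T hd (a := d) (b := 0) (by simp))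
    rw [hq, map_mul, h, zero_mul]
  rw [map_sub, aeval_T, aeval_T, T_real_cos, T_real_cos, sub_eq_zero] at hT
  obtain ⟨k, hk⟩ := (cos_eq_one_iff _).mp (by simpa using hT)
  have hke : (k : ℝ) * e = d := by
    field_simp at hk
    linarith [hk]
  exact Int.natCast_dvd_natCast.mp ⟨k, by rw [mul_comm]; exact_mod_cast hke.symm⟩

theorem isCoprime_minpoly_cos_two_pi_div {d e : ℕ} (hd : d ≠ 0) (he : e ≠ 0) (hde : d ≠ e) :
    IsCoprime (Ψ d) (Ψ e) := by
  have hirr_d := minpoly.irreducible (isIntegral_cos_two_pi_div hd)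
  have hirr_e := minpoly.irreducible (isIntegral_cos_two_pi_div he)
  rw [hirr_d.coprime_iff_not_dvd]
  intro hdvd
  refine hde (Nat.dvd_antisymm ?_ ?_)
  · exact dvd_of_aeval_cos_two_pi_div_minpoly he hd (minpoly.dvd_iff.mp hdvd)
  · exact dvd_of_aeval_cos_two_pi_div_minpoly hd he
      (minpoly.dvd_iff.mp (hirr_d.dvd_symm hirr_e hdvd))

theorem two_mul_natDegree_minpoly_cos_two_pi_div {d : ℕ} (hd : 3 ≤ d) :
    2 * (Ψ d).natDegree = d.totient := by
  have hd0 : d ≠ 0 := by omega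
  set θ := 2 * π / d with hθ
  set ζ : ℂ := Complex.exp (θ * Complex.I)
  have hζ : IsPrimitiveRoot ζ d := by
    convert Complex.isPrimitiveRoot_exp d hd0 using 2
    push_cast [θ]; ring
  have hζ0 : ζ ≠ 0 := Complex.exp_ne_zero _
  have hsum : ζ + ζ⁻¹ = 2 * (cos θ : ℂ) := by
    rw [← Complex.exp_neg, Complex.ofReal_cos, Complex.two_cos, neg_mul]
  have hζreal : ζ ∉ ℚ⟮(cos θ : ℂ)⟯ := fun h => by
    have hsin : 0 < sin θ := sin_pos_of_pos_of_lt_pi (by positivity) <| by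
      rw [hθ, div_lt_iff₀ (by positivity)]
      nlinarith [pi_pos, (show (3 : ℝ) ≤ d by exact_mod_cast hd)]
    rw [← Complex.exp_ofReal_mul_I_im θ] at hsin
    exact hsin.ne' (Complex.im_eq_zero_of_mem_adjoin_ofReal h)
  have hcos : finrank ℚ ℚ⟮(cos θ : ℂ)⟯ = (minpoly ℚ (cos θ)).natDegree := by
    have hint : IsIntegral ℚ (cos θ : ℂ) := (isIntegral_cos_two_pi_div hd0).algebraMap
    rw [adjoin.finrank hint, ← Complex.coe_algebraMap,
      minpoly.algebraMap_eq Complex.ofReal_injective]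
  rw [← hcos, ← finrank_adjoin_simple_eq_two_mul hζ0 hsum hζreal,
    adjoin.finrank (hζ.isIntegral (by omega)).tower_top, ← cyclotomic_eq_minpoly_rat hζ (by omega),
    natDegree_cyclotomic]

theorem minpoly_cos_two_pi_div_one : (Ψ 1) = X - 1 := by
  rw [Nat.cast_one, div_one, cos_two_pi, minpoly.one]

theorem natDegree_minpoly_cos_two_pi_div_two : (Ψ 2).natDegree = 1 := by
  have : cos (2 * π / (2 : ℕ)) = algebraMap ℚ ℝ (-1) := by simp
  rw [this, minpoly.eq_X_sub_C, natDegree_X_sub_C]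

theorem sum_natDegree_minpoly_cos_two_pi_div {n : ℕ} (hn : n ≠ 0) :
    ∑ d ∈ n.divisors, (Ψ d).natDegree = n / 2 + 1 := by
  have hdeg : ∀ d ∈ n.divisors, 2 * (Ψ d).natDegree =
      d.totient + ((if d = 1 then 1 else 0) + (if d = 2 then 1 else 0)) := by
    intro d hd
    rcases lt_or_ge d 3 with hd3 | hd3
    · interval_cases d
      · simp at hd
      · rw [minpoly_cos_two_pi_div_one, ← Polynomial.C_1, natDegree_X_sub_C]; rfl
      · rw [natDegree_minpoly_cos_two_pi_div_two]; rfl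
    · rw [two_mul_natDegree_minpoly_cos_two_pi_div hd3, if_neg (by omega), if_neg (by omega)]
      rfl
  have h2 := Finset.mul_sum n.divisors (fun d => (Ψ d).natDegree) 2
  rw [Finset.sum_congr rfl hdeg, Finset.sum_add_distrib, Finset.sum_add_distrib, Nat.sum_totient,
    Finset.sum_ite_eq', Finset.sum_ite_eq', if_pos (Nat.one_mem_divisors.mpr hn)] at h2
  by_cases h2n : 2 ∣ n
  · rw [if_pos (Nat.mem_divisors.mpr ⟨h2n, hn⟩)] at h2; omega
  · rw [if_neg (fun h => h2n (Nat.dvd_of_mem_divisors h))] at h2; omega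

theorem prod_psiTilde_divisors {n : ℕ} (hn : n ≠ 0) :
    ∏ d ∈ n.divisors, psiTilde d = Polynomial.C (2 ^ (n / 2)) * ∏ d ∈ n.divisors, Ψ d := by
  have h1 : 1 ∈ n.divisors := Nat.one_mem_divisors.mpr hn
  have hpsi : ∀ d ∈ n.divisors.erase 1,
      psiTilde d = Polynomial.C (2 ^ (Ψ d).natDegree) * Ψ d := fun d hd => by
    rw [psiTilde, if_neg (Finset.ne_of_mem_erase hd), smul_eq_C_mul]
  have hsum : ∑ d ∈ n.divisors.erase 1, (Ψ d).natDegree = n / 2 := by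
    have := Finset.add_sum_erase _ (fun d => (Ψ d).natDegree) h1
    rw [sum_natDegree_minpoly_cos_two_pi_div hn, minpoly_cos_two_pi_div_one, ← Polynomial.C_1,
      natDegree_X_sub_C] at this
    omega
  rw [← Finset.mul_prod_erase _ _ h1, Finset.prod_congr rfl hpsi, Finset.prod_mul_distrib,
    ← map_prod, Finset.prod_pow_eq_pow_sum, hsum, ← Finset.mul_prod_erase _ (fun d => Ψ d) h1,
    psiTilde, if_pos rfl, minpoly_cos_two_pi_div_one]
  ring

theorem T_sub_T_eq_C_mul_prod_minpoly {n a b : ℕ} (hab : a + b = n) (ha : a = n / 2 + 1) :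
    T ℚ a - T ℚ b = Polynomial.C (2 ^ (n / 2)) * ∏ d ∈ n.divisors, Ψ d := by
  have hba : b < a := by omega
  have hd0 : ∀ d ∈ n.divisors, d ≠ 0 := fun d hd => Nat.ne_of_gt (Nat.pos_of_mem_divisors hd)
  have hmonic_d : ∀ d ∈ n.divisors, (Ψ d).Monic :=
    fun d hd => minpoly.monic (isIntegral_cos_two_pi_div (hd0 d hd))
  have hmonic : (∏ d ∈ n.divisors, Ψ d).Monic := monic_prod_of_monic _ _ hmonic_d
  have hdvd : (∏ d ∈ n.divisors, Ψ d) ∣ T ℚ a - T ℚ b := by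
    refine Finset.prod_dvd_of_coprime (fun d hd e he hde => ?_) fun d hd => minpoly.dvd _ _ ?_
    · exact isCoprime_minpoly_cos_two_pi_div (hd0 d hd) (hd0 e he) hde
    · exact aeval_cos_two_pi_div_T_sub_T (hd0 d hd)
        (by exact_mod_cast hab ▸ Nat.dvd_of_mem_divisors hd)
  have hdeg : (∏ d ∈ n.divisors, Ψ d).natDegree = a := by
    rw [natDegree_prod_of_monic _ _ hmonic_d, sum_natDegree_minpoly_cos_two_pi_div (by omega), ha]
  rw [eq_leadingCoeff_mul_of_monic_of_dvd_of_natDegree_le hmonic hdvd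
    (by rw [natDegree_T_sub_T_of_lt hba, hdeg]), leadingCoeff_T_sub_T_of_lt hba, ha]
  simp

theorem watkins_zeitlin_general (n s : ℕ) :
    (n = 2 * s + 1 →
      Polynomial.Chebyshev.T ℚ (s + 1) - Polynomial.Chebyshev.T ℚ s =
        ∏ d ∈ n.divisors, psiTilde d) ∧
    (n = 2 * s → 1 ≤ s →
      Polynomial.Chebyshev.T ℚ (s + 1) - Polynomial.Chebyshev.T ℚ (s - 1 : ℕ) =
        ∏ d ∈ n.divisors, psiTilde d) := by
  have key : ∀ b : ℕ, s + 1 + b = n → s = n / 2 →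
      T ℚ (s + 1) - T ℚ b = ∏ d ∈ n.divisors, psiTilde d := fun b hb hs => by
    rw [prod_psiTilde_divisors (by omega), ← T_sub_T_eq_C_mul_prod_minpoly hb (by omega)]
    push_cast; rfl
  exact ⟨fun h => key s (by omega) (by omega), fun h _ => key (s - 1) (by omega) (by omega)⟩

/-- Integer-coefficient Watkins–Zeitlin relations: for odd `n = 2s + 1`,
`T_{s+1} - T_s = ∏_{d ∣ n} Ψ̃_d`, and for even `n = 2s`,
`T_{s+1} - T_{s-1} = ∏_{d ∣ n} Ψ̃_d`. -/
theorem watkins_zeitlin (n s : ℕ) (hn : 1 ≤ n) :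
    (n = 2 * s + 1 →
      Polynomial.Chebyshev.T ℚ (s + 1) - Polynomial.Chebyshev.T ℚ s =
        ∏ d ∈ n.divisors, psiTilde d) ∧
    (n = 2 * s → 1 ≤ s →
      Polynomial.Chebyshev.T ℚ (s + 1) - Polynomial.Chebyshev.T ℚ (s - 1 : ℕ) =
        ∏ d ∈ n.divisors, psiTilde d) :=
  watkins_zeitlin_general n s
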